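/- (Proposition 3) Let G_k=(V,E,k) be a strongly connected labeled simple digraph and let G_ℰ=(V,ℰ) be a star graph with root i_m. Then the core matrix 𝒜_{k,ℰ} ∈ ℝ^{ℰ×ℰ}, i.e. the unique matrix with A_k diag(K_k) = −I_ℰ 𝒜_{k,ℰ} I_ℰ^T, has entries (𝒜_{k,ℰ})_{(i→i_m),(j→i_m)} = −(A_k)_{i,j} (K_k)_j for all i,j ∈ V \ {i_m}; that is, 𝒜_{k,ℰ} equals −A_k diag(K_k) with row i_m and column i_m removed. Consequently, 𝒜_{k,ℰ} has positive diagonal entries, nonpositive off-diagonal entries, and is row and column diagonally dominant. -/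

import Mathlib

open Matrix BigOperators Finset

variable {V : Type*}

/-- Directed reachability in the digraph with edge set `F`. -/
def dReach (F : Finset (V × V)) : V → V → Prop :=
  Relation.ReflTransGen fun a b => (a, b) ∈ F

/-- Reachability in the underlying undirected graph of the digraph with edge set `F`. -/
def uReach (F : Finset (V × V)) : V → V → Prop :=
  Relation.ReflTransGen fun a b => (a, b) ∈ F ∨ (b, a) ∈ F

/-- A digraph is strongly connected if every vertex reaches every other vertex. -/
def StronglyConnected (F : Finset (V × V)) : Prop :=
  ∀ i j : V, dReach F i j

/-- A simple digraph has no self-loops. -/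
def NoSelfLoops (F : Finset (V × V)) : Prop :=
  ∀ e ∈ F, e.1 ≠ e.2

/-- The edge set `F` contains a directed cycle. -/
def HasDirectedCycle (F : Finset (V × V)) : Prop :=
  ∃ v : V, Relation.TransGen (fun a b => (a, b) ∈ F) v v

/-- The Laplacian matrix `A_k` of the labeled digraph `(V, F, k)`:
`(A_k)_{i,j} = k_{j→i}` if `(j→i) ∈ F`, `(A_k)_{i,i} = -∑_{(i→j)∈F} k_{i→j}`, and `0` otherwise. -/
noncomputable def digraphLaplacian [Fintype V] [DecidableEq V]
    (F : Finset (V × V)) (k : V × V → ℝ) : Matrix V V ℝ :=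
  Matrix.of fun i j =>
    if i = j then -(∑ e ∈ F.filter (fun e => e.1 = i), k e)
    else if (j, i) ∈ F then k (j, i) else 0

/-- `T` is a directed spanning tree of the strongly connected digraph `E`, rooted at `i`
and directed towards the root: no directed cycle, and every vertex except `i`
is the source of exactly one edge. -/
def IsSpanningTreeTo [DecidableEq V] (E : Finset (V × V)) (i : V)
    (T : Finset (V × V)) : Prop :=
  T ⊆ E ∧ ¬ HasDirectedCycle T ∧
    ∀ j : V, j ≠ i → (T.filter (fun e => e.1 = j)).card = 1

open scoped Classical in
/-- The tree constant `(K_k)_i = ∑_{T ∈ T_i} ∏_{(j→j')∈T} k_{j→j'}`. -/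
noncomputable def treeConst [Fintype V] [DecidableEq V]
    (E : Finset (V × V)) (k : V × V → ℝ) (i : V) : ℝ :=
  ∑ T ∈ E.powerset.filter (fun T => IsSpanningTreeTo E i T), ∏ e ∈ T, k e

/-- The incidence matrix of the digraph with edge set `F`: in the column of edge `(j→j')`,
entry `-1` in row `j`, entry `+1` in row `j'`, and `0` elsewhere. -/
noncomputable def incidence [DecidableEq V] (F : Finset (V × V)) :
    Matrix V {e : V × V // e ∈ F} ℝ :=
  Matrix.of fun i e =>
    (if (e : V × V).2 = i then (1 : ℝ) else 0) - (if (e : V × V).1 = i then (1 : ℝ) else 0)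

/-- A star graph with root `r` on the vertex set `V`: the edges are `i → r` for all
vertices `i ≠ r`. -/
def IsStarGraph {V : Type*} [Fintype V] [DecidableEq V] (F : Finset (V × V)) (r : V) : Prop :=
  F = (Finset.univ.filter (fun i => i ≠ r)).image (fun i => (i, r))

/-!
Every column of an incidence matrix sums to zero, so `I 𝒜 Iᵀ`, and with it
`M = A_k diag(K_k)`, has zero row and column sums. For a star graph with root `r`, the row of `I`
at a leaf `i` is minus the indicator of the edge `i → r`, whence `(I 𝒜 Iᵀ)_{i,j} = 𝒜_{(i→r),(j→r)}`:
the core matrix is `-M` with row and column `r` deleted. The sign pattern of `M` comes from the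
positive labels and positive tree constants; a spanning in-tree rooted at `i` exists because each
vertex can step to a neighbour strictly closer to `i`. Diagonal dominance of a principal submatrix
of `-M` then follows from the zero row and column sums of `M`.
-/

open Matrix Finset Relation Function

def ReachesWithin (R : V → V → Prop) (i : V) : ℕ → V → Prop
  | 0, j => j = i
  | n + 1, j => ReachesWithin R i n j ∨ ∃ c, R j c ∧ ReachesWithin R i n c

lemma exists_reachesWithin_of_reflTransGen {R : V → V → Prop} {i j : V}
    (h : ReflTransGen R j i) : ∃ n, ReachesWithin R i n j := by
  induction h using ReflTransGen.head_induction_on with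
  | refl => exact ⟨0, rfl⟩
  | head hjc _ ih =>
    obtain ⟨n, hn⟩ := ih
    exact ⟨n + 1, Or.inr ⟨_, hjc, hn⟩⟩

lemma exists_descending_step_of_reflTransGen {R : V → V → Prop} {i : V}
    (h : ∀ j, ReflTransGen R j i) : ∃ d : V → ℕ, ∀ j, j ≠ i → ∃ c, R j c ∧ d c < d j := by
  classical
  have hex := fun j => exists_reachesWithin_of_reflTransGen (h j)
  -- `d j` is the length of a shortest path from `j` to `i`.
  refine ⟨fun j => Nat.find (hex j), fun j hj => ?_⟩
  obtain ⟨n, hn⟩ : ∃ n, Nat.find (hex j) = n + 1 :=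
    Nat.exists_eq_succ_of_ne_zero fun h0 => hj <| by
      simpa [h0, ReachesWithin] using Nat.find_spec (hex j)
  have hspec := Nat.find_spec (hex j)
  rw [hn] at hspec
  rcases hspec with hjn | ⟨c, hjc, hcn⟩
  · exact absurd hjn (Nat.find_min (hex j) (by rw [hn]; exact n.lt_succ_self))
  · refine ⟨c, hjc, ?_⟩
    show Nat.find (hex c) < Nat.find (hex j)
    rw [hn]
    exact Nat.lt_succ_of_le (Nat.find_min' (hex c) hcn)

lemma not_hasDirectedCycle_of_lt {α : Type*} [Preorder α] {T : Finset (V × V)} (d : V → α)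
    (hd : ∀ e ∈ T, d e.2 < d e.1) : ¬ HasDirectedCycle T := by
  rintro ⟨v, hv⟩
  have hdesc : ∀ {a b}, TransGen (fun a b => (a, b) ∈ T) a b → d b < d a := by
    intro a b h
    induction h with
    | single h => exact hd _ h
    | tail _ h ih => exact (hd _ h).trans ih
  exact lt_irrefl _ (hdesc hv)

lemma exists_isSpanningTreeTo [Fintype V] [DecidableEq V] {E : Finset (V × V)}
    (hsc : StronglyConnected E) (i : V) : ∃ T, IsSpanningTreeTo E i T := by
  obtain ⟨d, hd⟩ := exists_descending_step_of_reflTransGen fun j => hsc j i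
  choose next hnext using fun j =>
    if hj : j = i then ⟨j, fun h => absurd hj h⟩ else (hd j hj).imp fun _ h _ => h
  refine ⟨(univ.filter (· ≠ i)).image fun j => (j, next j), ?_, ?_, fun j hj => ?_⟩
  · intro e he
    obtain ⟨j, hj, rfl⟩ := mem_image.1 he
    exact (hnext j (mem_filter.1 hj).2).1
  · refine not_hasDirectedCycle_of_lt d fun e he => ?_
    obtain ⟨j, hj, rfl⟩ := mem_image.1 he
    exact (hnext j (mem_filter.1 hj).2).2
  · rw [card_eq_one]
    refine ⟨(j, next j), ?_⟩
    ext ⟨a, b⟩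
    simp only [mem_filter, mem_image, mem_univ, true_and, Prod.mk.injEq, mem_singleton]
    constructor
    · rintro ⟨⟨x, -, rfl, rfl⟩, rfl⟩
      exact ⟨rfl, rfl⟩
    · rintro ⟨rfl, rfl⟩
      exact ⟨⟨a, hj, rfl, rfl⟩, rfl⟩

lemma treeConst_pos [Fintype V] [DecidableEq V] {E : Finset (V × V)} {k : V × V → ℝ}
    (hk : ∀ e ∈ E, 0 < k e) (hsc : StronglyConnected E) (i : V) : 0 < treeConst E k i := by
  classical
  unfold treeConst
  obtain ⟨T, hT⟩ := exists_isSpanningTreeTo hsc i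
  refine sum_pos (fun T hT => prod_pos fun e he => hk e ?_)
    ⟨T, mem_filter.2 ⟨mem_powerset.2 hT.1, hT⟩⟩
  exact mem_powerset.1 (mem_filter.1 hT).1 he

lemma exists_mem_of_dReach_of_ne {E : Finset (V × V)} {i j : V} (h : dReach E i j) (hij : i ≠ j) :
    ∃ c, (i, c) ∈ E := by
  rcases h.cases_head with h | ⟨c, hc, -⟩
  · exact absurd h hij
  · exact ⟨c, hc⟩

section Laplacian

variable [Fintype V] [DecidableEq V] {E : Finset (V × V)} {k : V × V → ℝ}

lemma digraphLaplacian_nonneg_of_ne (hk : ∀ e ∈ E, 0 < k e) {i j : V} (hij : i ≠ j) :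
    0 ≤ digraphLaplacian E k i j := by
  simp only [digraphLaplacian, of_apply, if_neg hij]
  split_ifs with h
  exacts [(hk _ h).le, le_rfl]

lemma digraphLaplacian_self_neg (hk : ∀ e ∈ E, 0 < k e) {i c : V} (hic : (i, c) ∈ E) :
    digraphLaplacian E k i i < 0 := by
  simp only [digraphLaplacian, of_apply, ↓reduceIte, neg_lt_zero]
  exact sum_pos (fun e he => hk e (mem_filter.1 he).1) ⟨(i, c), mem_filter.2 ⟨hic, rfl⟩⟩

end Laplacian

section Incidence

variable [DecidableEq V] {F : Finset (V × V)}

lemma sum_incidence_apply [Fintype V] (a : {e // e ∈ F}) : ∑ i, incidence F i a = 0 := by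
  simp [incidence, sum_sub_distrib]

lemma sum_incidence_mul_apply [Fintype V] {ι : Type*} (X : Matrix {e // e ∈ F} ι ℝ) (j : ι) :
    ∑ i, (incidence F * X) i j = 0 := by
  simp only [mul_apply]
  rw [sum_comm]
  simp [← sum_mul, sum_incidence_apply]

lemma sum_mul_incidence_transpose_apply [Fintype V] {ι : Type*} (X : Matrix ι {e // e ∈ F} ℝ)
    (i : ι) : ∑ j, (X * (incidence F)ᵀ) i j = 0 := by
  simp only [mul_apply, transpose_apply]
  rw [sum_comm]
  simp [← mul_sum, sum_incidence_apply]

variable [Fintype V] {r : V}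

lemma IsStarGraph.mem_iff (hF : IsStarGraph F r) {e : V × V} : e ∈ F ↔ e.2 = r ∧ e.1 ≠ r := by
  subst hF
  obtain ⟨a, b⟩ := e
  simp only [mem_image, mem_filter, mem_univ, true_and, Prod.mk.injEq]
  constructor
  · rintro ⟨x, hx, rfl, rfl⟩
    exact ⟨rfl, hx⟩
  · rintro ⟨rfl, ha⟩
    exact ⟨a, ha, rfl, rfl⟩

lemma IsStarGraph.fst_injective (hF : IsStarGraph F r) :
    Injective fun e : {e // e ∈ F} => (e : V × V).1 := by
  intro e e' h
  have he := hF.mem_iff.1 e.2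
  have he' := hF.mem_iff.1 e'.2
  exact Subtype.ext (Prod.ext h (he.1.trans he'.1.symm))

lemma IsStarGraph.incidence_fst_apply (hF : IsStarGraph F r) (e a : {e // e ∈ F}) :
    incidence F (e : V × V).1 a = -if a = e then 1 else 0 := by
  have hsnd : (a : V × V).2 ≠ (e : V × V).1 := (hF.mem_iff.1 a.2).1 ▸ (hF.mem_iff.1 e.2).2.symm
  simp only [incidence, of_apply, if_neg hsnd, zero_sub, hF.fst_injective.eq_iff]

lemma IsStarGraph.incidence_mul_mul_transpose_apply (hF : IsStarGraph F r)
    (A : Matrix {e // e ∈ F} {e // e ∈ F} ℝ) (e e' : {e // e ∈ F}) :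
    (incidence F * A * (incidence F)ᵀ) (e : V × V).1 (e' : V × V).1 = A e e' := by
  simp [mul_apply, hF.incidence_fst_apply]

end Incidence

lemma sum_erase_abs_le_abs_of_sum_eq_zero {n ι : Type*} [Fintype n] [Fintype ι] [DecidableEq n]
    [DecidableEq ι] {M : Matrix n n ℝ} (hoff : ∀ i j, i ≠ j → 0 ≤ M i j) {f : ι → n}
    (hf : Injective f) {a : ι} (hrow : ∑ j, M (f a) j = 0) :
    ∑ b ∈ univ.erase a, |M (f a) (f b)| ≤ |M (f a) (f a)| := by
  have hsub : (univ.erase a).map ⟨f, hf⟩ ⊆ univ.erase (f a) := by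
    intro j hj
    obtain ⟨b, hb, rfl⟩ := mem_map.1 hj
    exact mem_erase.2 ⟨hf.ne (ne_of_mem_erase hb), mem_univ _⟩
  calc ∑ b ∈ univ.erase a, |M (f a) (f b)|
      = ∑ j ∈ (univ.erase a).map ⟨f, hf⟩, M (f a) j := by
        rw [sum_map]
        exact sum_congr rfl fun b hb => abs_of_nonneg (hoff _ _ (hf.ne (ne_of_mem_erase hb).symm))
    _ ≤ ∑ j ∈ univ.erase (f a), M (f a) j :=
        sum_le_sum_of_subset_of_nonneg hsub fun j hj _ => hoff _ _ (ne_of_mem_erase hj).symm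
    _ = -M (f a) (f a) := by rw [sum_erase_eq_sub (mem_univ _), hrow, zero_sub]
    _ ≤ |M (f a) (f a)| := neg_le_abs _

theorem core_matrix_star_general
    {V : Type*} [Fintype V] [DecidableEq V]
    (E : Finset (V × V))
    (k : V × V → ℝ) (hk : ∀ e ∈ E, 0 < k e)
    (hsc : StronglyConnected E)
    (r : V) (F : Finset (V × V)) (hF : IsStarGraph F r) :
    ∀ A : Matrix {e : V × V // e ∈ F} {e : V × V // e ∈ F} ℝ,
      digraphLaplacian E k * Matrix.diagonal (treeConst E k) = -(incidence F * A * (incidence F)ᵀ) →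
      (∀ e e' : {e : V × V // e ∈ F},
        A e e' = -(digraphLaplacian E k (e : V × V).1 (e' : V × V).1 * treeConst E k (e' : V × V).1)) ∧
      (∀ e : {e : V × V // e ∈ F}, 0 < A e e) ∧
      (∀ e e' : {e : V × V // e ∈ F}, e ≠ e' → A e e' ≤ 0) ∧
      (∀ e : {e : V × V // e ∈ F}, ∑ e' ∈ Finset.univ.erase e, |A e e'| ≤ |A e e|) ∧
      (∀ e' : {e : V × V // e ∈ F}, ∑ e ∈ Finset.univ.erase e', |A e e'| ≤ |A e' e'|) := by
  intro A hA
  set M := digraphLaplacian E k * diagonal (treeConst E k)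
  have hKpos := treeConst_pos hk hsc
  have hMapply : ∀ i j, M i j = digraphLaplacian E k i j * treeConst E k j :=
    fun _ _ => mul_diagonal ..
  have hentry : ∀ e e' : {e // e ∈ F}, A e e' = -M (e : V × V).1 (e' : V × V).1 := fun e e' => by
    rw [hA, Matrix.neg_apply, neg_neg, hF.incidence_mul_mul_transpose_apply]
  have hrow : ∀ i, ∑ j, M i j = 0 := fun i => by
    simp only [hA, Matrix.neg_apply, sum_neg_distrib, sum_mul_incidence_transpose_apply, neg_zero]
  have hcol : ∀ j, ∑ i, M i j = 0 := fun j => by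
    simp only [hA, Matrix.neg_apply, sum_neg_distrib, Matrix.mul_assoc, sum_incidence_mul_apply,
      neg_zero]
  have hoff : ∀ i j, i ≠ j → 0 ≤ M i j := fun i j hij => by
    rw [hMapply]
    exact mul_nonneg (digraphLaplacian_nonneg_of_ne hk hij) (hKpos j).le
  have hfst := hF.fst_injective
  refine ⟨fun e e' => by rw [hentry, hMapply], fun e => ?_, fun e e' hee' => ?_, fun e => ?_,
    fun e' => ?_⟩
  · obtain ⟨c, hc⟩ := exists_mem_of_dReach_of_ne (hsc _ r) (hF.mem_iff.1 e.2).2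
    rw [hentry, hMapply, neg_pos]
    exact mul_neg_of_neg_of_pos (digraphLaplacian_self_neg hk hc) (hKpos _)
  · rw [hentry, neg_nonpos]
    exact hoff _ _ (hfst.ne hee')
  · simp only [hentry, abs_neg]
    exact sum_erase_abs_le_abs_of_sum_eq_zero hoff hfst (hrow _)
  · simp only [hentry, abs_neg]
    exact sum_erase_abs_le_abs_of_sum_eq_zero (M := Mᵀ) (fun i j h => hoff j i h.symm) hfst
      (hcol _)

/-- (Proposition 3) For a strongly connected labeled simple digraph and a star graph `G_ℰ`
with root `r`, the core matrix `𝒜_{k,ℰ}` (the unique matrix with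
`A_k diag(K_k) = -I_ℰ 𝒜_{k,ℰ} I_ℰᵀ`) has entries
`(𝒜_{k,ℰ})_{(i→r),(j→r)} = -(A_k)_{i,j} (K_k)_j`, i.e. it equals `-A_k diag(K_k)` with
row `r` and column `r` removed; consequently it has positive diagonal entries, nonpositive
off-diagonal entries, and is row and column diagonally dominant. -/
theorem core_matrix_star
    {V : Type*} [Fintype V] [DecidableEq V]
    (E : Finset (V × V)) (hloop : NoSelfLoops E)
    (k : V × V → ℝ) (hk : ∀ e ∈ E, 0 < k e)
    (hsc : StronglyConnected E)
    (r : V) (F : Finset (V × V)) (hF : IsStarGraph F r) :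
    ∀ A : Matrix {e : V × V // e ∈ F} {e : V × V // e ∈ F} ℝ,
      digraphLaplacian E k * Matrix.diagonal (treeConst E k) = -(incidence F * A * (incidence F)ᵀ) →
      (∀ e e' : {e : V × V // e ∈ F},
        A e e' = -(digraphLaplacian E k (e : V × V).1 (e' : V × V).1 * treeConst E k (e' : V × V).1)) ∧
      (∀ e : {e : V × V // e ∈ F}, 0 < A e e) ∧
      (∀ e e' : {e : V × V // e ∈ F}, e ≠ e' → A e e' ≤ 0) ∧
      (∀ e : {e : V × V // e ∈ F}, ∑ e' ∈ Finset.univ.erase e, |A e e'| ≤ |A e e|) ∧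
      (∀ e' : {e : V × V // e ∈ F}, ∑ e ∈ Finset.univ.erase e', |A e e'| ≤ |A e' e'|) :=
  core_matrix_star_general E k hk hsc r F hF
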